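/- Let (a_n) be a real sequence and let c > 0 and d > 1 be real constants such that a_n is asymptotically equivalent to c · d^n · n^(−3/2) as n → ∞. Then the weighted partial sums satisfy: ∑_{i=1}^{n} i · a_i is asymptotically equivalent to c · (d/(d−1)) · d^n · n^(−1/2) as n → ∞. -/

import Mathlib

/-!
Put `x n = c d^n n^(-1/2)`, so that `n a_n ~ x n`. Since `x (n+1) / x n → d > 1`, the series of
`x` diverges and its partial sums are dominated by the last terms: the defect
`d x_i - x_(i+1) = o(x_i)` telescopes to `(d - 1) ∑_(i<n) x_i - x_n + x_0 = o(∑_(i<n) x_i)`,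
whence `∑_(i≤n) x_i ~ d/(d-1) x_n`. Summing the equivalence `n a_n ~ x n` against the divergent
nonnegative series of `x` gives the same equivalent for `∑_(i≤n) i a_i`.
-/

open Filter Finset Asymptotics Topology

theorem Asymptotics.IsEquivalent.sum_range {f g : ℕ → ℝ} (h : f ~[atTop] g) (hg : 0 ≤ g)
    (hg_sum : Tendsto (fun n => ∑ i ∈ range n, g i) atTop atTop) :
    (fun n => ∑ i ∈ range n, f i) ~[atTop] fun n => ∑ i ∈ range n, g i := by
  simpa only [IsEquivalent, Pi.sub_def, ← sum_sub_distrib] using h.isLittleO.sum_range hg hg_sum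

theorem tendsto_sum_range_atTop_of_tendsto_ratio {x : ℕ → ℝ} {l : ℝ} (hl : 1 < l)
    (hx : 0 ≤ x) (h : Tendsto (fun n => x (n + 1) / x n) atTop (𝓝 l)) :
    Tendsto (fun n => ∑ i ∈ range n, x i) atTop atTop := by
  rw [← not_summable_iff_tendsto_nat_atTop_of_nonneg hx]
  refine not_summable_of_ratio_test_tendsto_gt_one hl (h.congr fun n => ?_)
  rw [Real.norm_of_nonneg (hx _), Real.norm_of_nonneg (hx _)]

theorem isLittleO_const_mul_sub_succ_of_tendsto_ratio {x : ℕ → ℝ} {d : ℝ} (hd : d ≠ 0)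
    (h : Tendsto (fun n => x (n + 1) / x n) atTop (𝓝 d)) :
    (fun n => d * x n - x (n + 1)) =o[atTop] x := by
  have hx_ne : ∀ᶠ n in atTop, x n ≠ 0 := by
    filter_upwards [h.eventually_ne hd] with n hn hxn
    simp [hxn] at hn
  rw [isLittleO_iff_tendsto' (hx_ne.mono fun n hn h0 => absurd h0 hn)]
  have hlim := (tendsto_const_nhds (x := d)).sub h
  rw [sub_self] at hlim
  refine hlim.congr' (hx_ne.mono fun n hn => ?_)
  field_simp

theorem isEquivalent_sum_range_succ_of_tendsto_ratio {x : ℕ → ℝ} {d : ℝ} (hd : 1 < d)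
    (hx : 0 ≤ x) (h : Tendsto (fun n => x (n + 1) / x n) atTop (𝓝 d)) :
    (fun n => ∑ i ∈ range (n + 1), x i) ~[atTop] fun n => d / (d - 1) * x n := by
  set T : ℕ → ℝ := fun n => ∑ i ∈ range n, x i
  have hT : Tendsto T atTop atTop := tendsto_sum_range_atTop_of_tendsto_ratio hd hx h
  have hdefect := isLittleO_const_mul_sub_succ_of_tendsto_ratio (zero_lt_one.trans hd).ne' h
  have hsum : (fun n => (d - 1) * T n - x n + x 0) =o[atTop] T := by
    refine (hdefect.sum_range hx hT).congr (fun n => ?_) fun _ => rfl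
    have h1 := sum_range_succ' x n
    have h2 := sum_range_succ x n
    simp only [T, sum_sub_distrib, ← mul_sum]
    linarith
  have hx0 : (fun _ => x 0) =o[atTop] T :=
    isLittleO_const_left.2 (Or.inr (tendsto_norm_atTop_atTop.comp hT))
  have hTO : T =O[atTop] fun n => T (n + 1) := by
    refine IsBigO.of_bound 1 (Eventually.of_forall fun n => ?_)
    have hT0 : 0 ≤ T n := sum_nonneg fun i _ => hx i
    have hle : T n ≤ T (n + 1) := by
      simpa only [T, sum_range_succ] using le_add_of_nonneg_right (hx n)
    rw [Real.norm_of_nonneg hT0, Real.norm_of_nonneg (hT0.trans hle), one_mul]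
    exact hle
  refine IsEquivalent.symm ?_
  have hd1 : d - 1 ≠ 0 := sub_ne_zero.2 hd.ne'
  have := ((hsum.sub hx0).const_mul_left (d - 1)⁻¹).neg_left.trans_isBigO hTO
  refine this.congr (fun n => ?_) fun _ => rfl
  simp only [T, sum_range_succ, Pi.sub_apply]
  field_simp
  ring

theorem tendsto_ratio_mul_pow_mul_rpow {c d : ℝ} (hc : c ≠ 0) (hd : d ≠ 0) (r : ℝ) :
    Tendsto
      (fun n : ℕ => c * d ^ (n + 1) * ((n + 1 : ℕ) : ℝ) ^ r / (c * d ^ n * (n : ℝ) ^ r))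
      atTop (𝓝 d) := by
  have hlim : Tendsto (fun n : ℕ => d * ((n : ℝ) / (n + 1)) ^ (-r)) atTop (𝓝 d) := by
    simpa using
      ((tendsto_natCast_div_add_atTop (1 : ℝ)).rpow_const (Or.inl one_ne_zero)).const_mul d
  refine hlim.congr' ((eventually_gt_atTop 0).mono fun n hn => ?_)
  have hn : (0 : ℝ) < n := Nat.cast_pos.2 hn
  rw [Real.div_rpow hn.le (by positivity), Real.rpow_neg hn.le, Real.rpow_neg (by positivity)]
  push_cast
  field_simp
  ring

theorem sum_Icc_one_natCast_mul (f : ℕ → ℝ) (n : ℕ) :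
    ∑ i ∈ Icc 1 n, (i : ℝ) * f i = ∑ i ∈ range (n + 1), (i : ℝ) * f i := by
  rw [range_eq_Ico, sum_eq_sum_Ico_succ_bot (Nat.succ_pos n), Nat.cast_zero, zero_mul, zero_add,
    zero_add, Nat.succ_eq_add_one, Ico_add_one_right_eq_Icc]

theorem weighted_partial_sums_isEquivalent
    (a : ℕ → ℝ) (c d : ℝ) (hc : 0 < c) (hd : 1 < d)
    (ha : Asymptotics.IsEquivalent atTop a
      (fun n => c * d ^ n * (n : ℝ) ^ (-(3 / 2 : ℝ)))) :
    Asymptotics.IsEquivalent atTop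
      (fun n : ℕ => ∑ i ∈ Finset.Icc 1 n, (i : ℝ) * a i)
      (fun n => c * (d / (d - 1)) * d ^ n * (n : ℝ) ^ (-(1 / 2 : ℝ))) := by
  have hd0 : 0 < d := zero_lt_one.trans hd
  set x : ℕ → ℝ := fun n => c * d ^ n * (n : ℝ) ^ (-(1 / 2 : ℝ))
  have hx : 0 ≤ x := fun n => by positivity
  have hratio : Tendsto (fun n => x (n + 1) / x n) atTop (𝓝 d) :=
    tendsto_ratio_mul_pow_mul_rpow hc.ne' hd0.ne' _
  have hb : (fun n : ℕ => (n : ℝ) * a n) ~[atTop] x := by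
    refine (IsEquivalent.refl.mul ha).congr_right (Eventually.of_forall fun n => ?_)
    have hpow : (n : ℝ) * (n : ℝ) ^ (-(3 / 2 : ℝ)) = (n : ℝ) ^ (-(1 / 2 : ℝ)) := by
      rw [← Real.rpow_one_add' n.cast_nonneg (by norm_num)]
      norm_num
    simp only [Pi.mul_apply, x, ← hpow]
    ring
  have hsum : (fun n => ∑ i ∈ range (n + 1), (i : ℝ) * a i) ~[atTop]
      fun n => ∑ i ∈ range (n + 1), x i :=
    (hb.sum_range hx (tendsto_sum_range_atTop_of_tendsto_ratio hd hx hratio)).comp_tendsto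
      (tendsto_add_atTop_nat 1)
  refine ((hsum.trans (isEquivalent_sum_range_succ_of_tendsto_ratio hd hx hratio)).congr_left
    (Eventually.of_forall fun n => (sum_Icc_one_natCast_mul a n).symm)).congr_right
    (Eventually.of_forall fun n => ?_)
  simp only [x]
  ring
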